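/- arXiv:1901.03197 — 10 statements merged into one kernel-verified Lean document; each statement's English description precedes it below -/
import Mathlib

section
/- Call a right S-act A uniform if every nonzero subact B of A is large, i.e., any congruence ρ on A with ρ ∩ (B×B ∪ Δ) = Δ must be Δ. If S = S_S is right uniform as an act over itself and x·y = y for elements x, y ∈ S, then either x is a left identity of S (x·s = s for all s ∈ S) or y is a left zero of S (y·s = y for all s ∈ S). -/
/-- `r` is a (right) congruence on the right `S`-act `A` with action `act`. -/
def IsCong {S A : Type*} (act : A → S → A) (r : A → A → Prop) : Prop :=
  Equivalence r ∧ ∀ a b s, r a b → r (act a s) (act b s)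

/-- a relation is non-diagonal. -/
def Nondiag {A : Type*} (r : A → A → Prop) : Prop :=
  ∃ x y, r x y ∧ x ≠ y

/-- `B` is a subact of the act `(A, act)`. -/
def IsSubact {S A : Type*} (act : A → S → A) (B : Set A) : Prop :=
  ∀ a ∈ B, ∀ s, act a s ∈ B

/-- `a` is a zero (fixed) element of the act. -/
def IsZeroElm {S A : Type*} (act : A → S → A) (a : A) : Prop :=
  ∀ s, act a s = a

/-- `B` is a large subact: any congruence meeting `(B×B) ∪ Δ` only in the diagonal
is the diagonal. -/
def IsLarge {S A : Type*} (act : A → S → A) (B : Set A) : Prop :=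
  ∀ r, IsCong act r → (∀ x ∈ B, ∀ y ∈ B, r x y → x = y) → ∀ x y, r x y → x = y

/-- the act is uniform: every nonzero subact is large. -/
def IsUniformAct {S A : Type*} (act : A → S → A) : Prop :=
  ∀ B : Set A, IsSubact act B → (∃ x ∈ B, ¬ IsZeroElm act x) → IsLarge act B

/-- the act is subdirectly irreducible: there is a least non-diagonal congruence. -/
def IsSI {S A : Type*} (act : A → S → A) : Prop :=
  ∃ r, IsCong act r ∧ Nondiag r ∧
    ∀ r', IsCong act r' → Nondiag r' → ∀ x y, r x y → r' x y

/-- the act is irreducible: two congruences intersecting in the diagonal cannot both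
be non-diagonal. -/
def IsIrr {S A : Type*} (act : A → S → A) : Prop :=
  ∀ r r', IsCong act r → IsCong act r' →
    (∀ x y, r x y → r' x y → x = y) →
    (∀ x y, r x y → x = y) ∨ (∀ x y, r' x y → x = y)

/-- the congruence generated by the pair `(a, b)`. -/
def GenCong {S A : Type*} (act : A → S → A) (a b : A) : A → A → Prop :=
  fun x y => ∀ r, IsCong act r → r a b → r x y

/-- a semigroup is right uniform if it is uniform as a right act over itself. -/
def RightUniform (S : Type*) [Mul S] : Prop :=
  IsUniformAct (fun a s : S => a * s)

/-- Rees matrix semigroup multiplication over the 0-group `G⁰` (entries of the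
sandwich matrix `P` in `Option G`, i.e. possibly zero); `none` is the zero. -/
def rees0Mul {G I Λ : Type*} [Group G] (P : Λ → I → Option G) :
    Option (I × G × Λ) → Option (I × G × Λ) → Option (I × G × Λ)
  | some (i, a, l), some (j, b, m) => (P l j).map fun p => (i, a * p * b, m)
  | _, _ => none

/-- Rees matrix semigroup multiplication with zero, all sandwich entries nonzero. -/
def reesMul0 {G I Λ : Type*} [Group G] (P : Λ → I → G) :
    Option (I × G × Λ) → Option (I × G × Λ) → Option (I × G × Λ)
  | some (i, a, l), some (j, b, m) => some (i, a * P l j * b, m)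
  | _, _ => none

/-- Rees matrix semigroup multiplication without zero (completely simple case). -/
def reesMulS {G I Λ : Type*} [Group G] (P : Λ → I → G) :
    I × G × Λ → I × G × Λ → I × G × Λ
  | (i, a, l), (j, b, m) => (i, a * P l j * b, m)

/-- multiplication of the group with zero adjoined `H⁰`. -/
def g0Mul {H : Type*} [Group H] : Option H → Option H → Option H
  | some a, some b => some (a * b)
  | _, _ => none

/-- a group is cocyclic: it has a least nontrivial subgroup. -/
def Cocyclic (H : Type*) [Group H] : Prop :=
  ∃ N : Subgroup H, N ≠ ⊥ ∧ ∀ K : Subgroup H, K ≠ ⊥ → N ≤ K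

/-- any two nontrivial subgroups intersect nontrivially. -/
def EssentialSubgroups (H : Type*) [Group H] : Prop :=
  ∀ K L : Subgroup H, K ≠ ⊥ → L ≠ ⊥ → K ⊓ L ≠ ⊥

theorem stmt0 {S : Type*} [Semigroup S] (hu : RightUniform S)
    (x y : S) (hxy : x * y = y) :
    (∀ s : S, x * s = s) ∨ (∀ s : S, y * s = y) := by
  by_cases hy : ∀ s : S, y * s = y
  · exact Or.inr hy
  push_neg at hy
  obtain ⟨s0, hs0⟩ := hy
  left
  -- iterated left multiplication by x
  let xp : ℕ → S → S := fun n a => Nat.rec a (fun _ b => x * b) n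
  have xp_zero : ∀ a, xp 0 a = a := fun a => rfl
  have xp_succ : ∀ n a, xp (n+1) a = x * xp n a := fun n a => rfl
  have xp_mul : ∀ n a s, xp n (a * s) = xp n a * s := by
    intro n a s
    induction n with
    | zero => rfl
    | succ k ih => rw [xp_succ, xp_succ, ih, mul_assoc]
  have xp_add : ∀ m n a, xp m (xp n a) = xp (m + n) a := by
    intro m n a
    induction m with
    | zero => rw [Nat.zero_add]; rfl
    | succ k ih => rw [xp_succ, ih, Nat.add_right_comm, xp_succ]
  set B : Set S := {b | b = y ∨ ∃ s, b = y * s} with hB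
  have hyB : y ∈ B := Or.inl rfl
  have hsub : IsSubact (fun a s : S => a * s) B := by
    rintro a (rfl | ⟨s, rfl⟩) t
    · exact Or.inr ⟨t, rfl⟩
    · exact Or.inr ⟨s * t, mul_assoc y s t⟩
  have hnz : ∃ b ∈ B, ¬ IsZeroElm (fun a s : S => a * s) b :=
    ⟨y, hyB, fun h => hs0 (h s0)⟩
  have hfix : ∀ b ∈ B, x * b = b := by
    rintro b (rfl | ⟨s, rfl⟩)
    · exact hxy
    · rw [← mul_assoc, hxy]
  have hfixn : ∀ n, ∀ b ∈ B, xp n b = b := by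
    intro n b hb
    induction n with
    | zero => rfl
    | succ k ih => rw [xp_succ, ih, hfix b hb]
  -- the congruence
  set r : S → S → Prop := fun a b => ∃ m n, xp m a = xp n b with hr
  have hcong : IsCong (fun a s : S => a * s) r := by
    constructor
    · constructor
      · exact fun a => ⟨0, 0, rfl⟩
      · rintro a b ⟨m, n, h⟩; exact ⟨n, m, h.symm⟩
      · rintro a b c ⟨m, n, h1⟩ ⟨p, q, h2⟩
        refine ⟨p + m, n + q, ?_⟩
        rw [← xp_add, h1, xp_add, Nat.add_comm p n, ← xp_add, h2, xp_add]
    · rintro a b s ⟨m, n, h⟩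
      exact ⟨m, n, by rw [xp_mul, xp_mul, h]⟩
  have hdiag : ∀ a ∈ B, ∀ b ∈ B, r a b → a = b := by
    rintro a ha b hb ⟨m, n, h⟩
    rw [hfixn m a ha, hfixn n b hb] at h
    exact h
  have := hu B hsub hnz r hcong hdiag
  intro s
  exact this (x * s) s ⟨0, 1, rfl⟩
end

section
/- Let S be a semigroup and A a uniform right S-act that is nonzero (has at least two elements or at least one non-zero element). If B and C are nonzero subacts of A, then B ∩ C has at least two elements. -/
theorem stmt1 {S A : Type*} [Semigroup S] (act : A → S → A)
    (hact : ∀ a s t, act (act a s) t = act a (s * t))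
    (hu : IsUniformAct act)
    (hnz : (∃ a b : A, a ≠ b) ∨ (∃ a : A, ¬ IsZeroElm act a))
    (B C : Set A) (hB : IsSubact act B) (hC : IsSubact act C)
    (hBnz : ∃ x ∈ B, ¬ IsZeroElm act x) (hCnz : ∃ x ∈ C, ¬ IsZeroElm act x) :
    ∃ x ∈ B ∩ C, ∃ y ∈ B ∩ C, x ≠ y := by
  -- Use the congruence  Δ ∪ (B × B)
  set r : A → A → Prop := fun x y => x = y ∨ (x ∈ B ∧ y ∈ B) with hr
  have hcong : IsCong act r := by
    refine ⟨⟨fun x => Or.inl rfl, ?_, ?_⟩, ?_⟩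
    · rintro x y (rfl | ⟨hx, hy⟩)
      · exact Or.inl rfl
      · exact Or.inr ⟨hy, hx⟩
    · rintro x y z (rfl | ⟨hx, hy⟩) (rfl | ⟨hy', hz⟩)
      · exact Or.inl rfl
      · exact Or.inr ⟨hy', hz⟩
      · exact Or.inr ⟨hx, hy⟩
      · exact Or.inr ⟨hx, hz⟩
    · rintro a b s (rfl | ⟨ha, hb⟩)
      · exact Or.inl rfl
      · exact Or.inr ⟨hB a ha s, hB b hb s⟩
  -- r is non-diagonal since B has a non-zero element
  obtain ⟨b, hbB, hbnz⟩ := hBnz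
  simp only [IsZeroElm, not_forall] at hbnz
  obtain ⟨s, hs⟩ := hbnz
  have hCL : IsLarge act C := hu C hC hCnz
  by_contra h
  push_neg at h
  have : ∀ x y, r x y → x = y := by
    apply hCL r hcong
    intro x hxC y hyC hxy
    rcases hxy with rfl | ⟨hxB, hyB⟩
    · rfl
    · exact h x ⟨hxB, hxC⟩ y ⟨hyB, hyC⟩
  exact hs (this (act b s) b (Or.inr ⟨hB b hbB s, hbB⟩))
end

section
/- In a right uniform semigroup S, every idempotent element e (e·e = e) is either a left zero of S or a left identity of S. -/
theorem stmt2 {S : Type*} [Semigroup S] (hu : RightUniform S)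
    (e : S) (he : e * e = e) :
    (∀ s : S, e * s = e) ∨ (∀ s : S, e * s = s) := by
  by_cases hz : ∀ s : S, e * s = e
  · exact Or.inl hz
  · right
    push_neg at hz
    obtain ⟨s0, hs0⟩ := hz
    set B : Set S := Set.range (fun t => e * t) with hB
    have hsub : IsSubact (fun a s : S => a * s) B := by
      rintro a ⟨t, rfl⟩ s
      exact ⟨t * s, (mul_assoc e t s).symm⟩
    have hnz : ∃ x ∈ B, ¬ IsZeroElm (fun a s : S => a * s) x := by
      refine ⟨e, ⟨e, he⟩, fun h => hs0 (h s0)⟩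
    have hlarge := hu B hsub hnz
    have hcong : IsCong (fun a s : S => a * s) (fun x y => e * x = e * y) := by
      refine ⟨⟨fun _ => rfl, fun h => h.symm, fun h1 h2 => h1.trans h2⟩, ?_⟩
      intro a b s h
      simp only [← mul_assoc, h]
    have hdiag : ∀ x ∈ B, ∀ y ∈ B, e * x = e * y → x = y := by
      rintro x ⟨t, rfl⟩ y ⟨u, rfl⟩ h
      calc e * t = e * (e * t) := by rw [← mul_assoc, he]
        _ = e * (e * u) := h
        _ = e * u := by rw [← mul_assoc, he]
    have := hlarge _ hcong hdiag
    intro s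
    exact this (e * s) s (by rw [← mul_assoc, he])
end

section
/- Let S = M⁰[G; {i}, Λ; P] be a completely 0-simple semigroup with singleton I and all sandwich entries nonzero, and let ρ = ρ(m,n) be the right congruence generated by the pair m = (i,a,λ) ≠ n = (i,b,μ). Set X = a p_{λi} (b p_{μi})⁻¹ ∈ G. Then for nonzero elements: the ρ-class of m equals {(i, Xⁿ b, μ) : n ∈ ℤ} ∪ {(i, Xⁿ a, λ) : n ∈ ℤ}, and for any nonzero z = (i, z₀, ϑ) not in this class, the ρ-class of z equals {(i, Xⁿ z₀, ϑ) : n ∈ ℤ}. Moreover the ρ-class of 0 is {0}. -/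
section Stmt8Aux

variable {G Λ : Type*} [Group G]

/-- the candidate class of `m`. -/
def Mset (a b : G) (lam mu : Λ) (X : G) : Set (Option (Unit × G × Λ)) :=
  {w | (∃ k : ℤ, w = some ((), X ^ k * a, lam)) ∨ ∃ k : ℤ, w = some ((), X ^ k * b, mu)}

lemma none_not_mem_Mset (a b : G) (lam mu : Λ) (X : G) :
    (none : Option (Unit × G × Λ)) ∉ Mset a b lam mu X := by
  simp [Mset]

lemma Mset_shift {a b : G} {lam mu : Λ} {X g : G} {θ : Λ}
    (h : (some ((), g, θ) : Option (Unit × G × Λ)) ∈ Mset a b lam mu X) (k : ℤ) :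
    (some ((), X ^ k * g, θ) : Option (Unit × G × Λ)) ∈ Mset a b lam mu X := by
  rcases h with ⟨j, hj⟩ | ⟨j, hj⟩
  · obtain ⟨hg, hθ⟩ : g = X ^ j * a ∧ θ = lam := by simpa using hj
    exact Or.inl ⟨k + j, by rw [hg, hθ, ← mul_assoc, ← zpow_add]⟩
  · obtain ⟨hg, hθ⟩ : g = X ^ j * b ∧ θ = mu := by simpa using hj
    exact Or.inr ⟨k + j, by rw [hg, hθ, ← mul_assoc, ← zpow_add]⟩

/-- the candidate congruence. -/
def Rrel (a b : G) (lam mu : Λ) (X : G) (x y : Option (Unit × G × Λ)) : Prop :=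
  (x = none ∧ y = none) ∨
  (∃ (g h : G) (θ : Λ) (k : ℤ), x = some ((), g, θ) ∧ y = some ((), h, θ) ∧ g = X ^ k * h) ∨
  (x ∈ Mset a b lam mu X ∧ y ∈ Mset a b lam mu X)

lemma Rrel_refl (a b : G) (lam mu : Λ) (X : G) (x : Option (Unit × G × Λ)) :
    Rrel a b lam mu X x x := by
  rcases x with _ | ⟨u, g, θ⟩
  · exact Or.inl ⟨rfl, rfl⟩
  · exact Or.inr (Or.inl ⟨g, g, θ, 0, by cases u; rfl, by cases u; rfl, by simp⟩)

lemma Rrel_symm {a b : G} {lam mu : Λ} {X : G} {x y : Option (Unit × G × Λ)}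
    (h : Rrel a b lam mu X x y) : Rrel a b lam mu X y x := by
  rcases h with ⟨hx, hy⟩ | ⟨g, h, θ, k, hx, hy, hg⟩ | ⟨hx, hy⟩
  · exact Or.inl ⟨hy, hx⟩
  · refine Or.inr (Or.inl ⟨h, g, θ, -k, hy, hx, ?_⟩)
    rw [hg, ← mul_assoc, ← zpow_add]; simp
  · exact Or.inr (Or.inr ⟨hy, hx⟩)

lemma Rrel_trans {a b : G} {lam mu : Λ} {X : G} {x y z : Option (Unit × G × Λ)}
    (h1 : Rrel a b lam mu X x y) (h2 : Rrel a b lam mu X y z) :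
    Rrel a b lam mu X x z := by
  rcases h1 with ⟨hx, hy⟩ | ⟨g, h, θ, k, hx, hy, hg⟩ | ⟨hx, hy⟩
  · rcases h2 with ⟨hy', hz⟩ | ⟨g', h', θ', k', hy', hz, hg'⟩ | ⟨hy', hz⟩
    · exact Or.inl ⟨hx, hz⟩
    · rw [hy] at hy'; cases hy'
    · rw [hy] at hy'; exact absurd hy' (none_not_mem_Mset a b lam mu X)
  · rcases h2 with ⟨hy', hz⟩ | ⟨g', h', θ', k', hy', hz, hg'⟩ | ⟨hy', hz⟩
    · rw [hy'] at hy; cases hy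
    · rw [hy] at hy'
      obtain ⟨hgg, hθ⟩ : g' = h ∧ θ' = θ := by simpa using hy'.symm
      refine Or.inr (Or.inl ⟨g, h', θ, k + k', hx, by rw [hz, hθ], ?_⟩)
      rw [hg, ← hgg, hg', ← mul_assoc, ← zpow_add]
    · rw [hy] at hy'
      have hxM : x ∈ Mset a b lam mu X := by
        rw [hx, hg]; exact Mset_shift hy' k
      exact Or.inr (Or.inr ⟨hxM, hz⟩)
  · rcases h2 with ⟨hy', hz⟩ | ⟨g', h', θ', k', hy', hz, hg'⟩ | ⟨hy', hz⟩
    · rw [hy'] at hy; exact absurd hy (none_not_mem_Mset a b lam mu X)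
    · rw [hy'] at hy
      have hzM : z ∈ Mset a b lam mu X := by
        have hh' : h' = X ^ (-k') * g' := by rw [hg', ← mul_assoc, ← zpow_add]; simp
        rw [hz, hh']; exact Mset_shift hy (-k')
      exact Or.inr (Or.inr ⟨hx, hzM⟩)
    · exact Or.inr (Or.inr ⟨hx, hz⟩)

lemma prod_form {P : Λ → Unit → G} {a b : G} {lam mu : Λ} {X : G}
    (hKey : a * P lam () = X * (b * P mu ())) {w : Option (Unit × G × Λ)}
    (hw : w ∈ Mset a b lam mu X) (c : G) (θ' : Λ) :
    ∃ j : ℤ, reesMul0 P w (some ((), c, θ')) =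
      some ((), X ^ j * (b * P mu () * c), θ') := by
  rcases hw with ⟨k, hk⟩ | ⟨k, hk⟩
  · refine ⟨k + 1, ?_⟩
    subst hk
    show some ((), X ^ k * a * P lam () * c, θ') = _
    rw [mul_assoc (X ^ k) a (P lam ()), hKey, zpow_add, zpow_one]
    simp [mul_assoc]
  · refine ⟨k, ?_⟩
    subst hk
    show some ((), X ^ k * b * P mu () * c, θ') = _
    simp [mul_assoc]

lemma Rrel_compat (P : Λ → Unit → G) {a b : G} {lam mu : Λ} {X : G}
    (hKey : a * P lam () = X * (b * P mu ())) :
    ∀ x y s, Rrel a b lam mu X x y →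
      Rrel a b lam mu X (reesMul0 P x s) (reesMul0 P y s) := by
  intro x y s hxy
  rcases s with _ | ⟨u, c, θ'⟩
  · have hx : reesMul0 P x none = none := by rcases x with _ | ⟨_, _, _⟩ <;> rfl
    have hy : reesMul0 P y none = none := by rcases y with _ | ⟨_, _, _⟩ <;> rfl
    exact Or.inl ⟨hx, hy⟩
  · cases u
    rcases hxy with ⟨hx, hy⟩ | ⟨g, h, θ, k, hx, hy, hg⟩ | ⟨hx, hy⟩
    · subst hx; subst hy; exact Or.inl ⟨rfl, rfl⟩
    · subst hx; subst hy
      refine Or.inr (Or.inl ⟨g * P θ () * c, h * P θ () * c, θ', k, rfl, rfl, ?_⟩)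
      rw [hg]; simp [mul_assoc]
    · obtain ⟨j1, hj1⟩ := prod_form hKey hx c θ'
      obtain ⟨j2, hj2⟩ := prod_form hKey hy c θ'
      refine Or.inr (Or.inl ⟨X ^ j1 * (b * P mu () * c), X ^ j2 * (b * P mu () * c),
        θ', j1 - j2, hj1, hj2, ?_⟩)
      rw [← mul_assoc (X ^ (j1 - j2)), ← zpow_add, sub_add_cancel, mul_assoc]

lemma r'_step {P : Λ → Unit → G} {a b : G} {lam mu : Λ} {X : G}
    (hX : X = a * P lam () * (b * P mu ())⁻¹)
    {r' : Option (Unit × G × Λ) → Option (Unit × G × Λ) → Prop}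
    (hr' : IsCong (reesMul0 P) r')
    (hmn : r' (some ((), a, lam)) (some ((), b, mu))) (g : G) (θ : Λ) :
    r' (some ((), X * g, θ)) (some ((), g, θ)) := by
  have key := hr'.2 _ _ (some ((), (b * P mu ())⁻¹ * g, θ)) hmn
  have h1 : a * P lam () * ((b * P mu ())⁻¹ * g) = X * g := by
    rw [← mul_assoc, ← hX]
  have h2 : b * P mu () * ((b * P mu ())⁻¹ * g) = g := mul_inv_cancel_left _ _
  have key' : r' (some ((), a * P lam () * ((b * P mu ())⁻¹ * g), θ))
      (some ((), b * P mu () * ((b * P mu ())⁻¹ * g), θ)) := key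
  rwa [h1, h2] at key'

lemma r'_zstep {P : Λ → Unit → G} {a b : G} {lam mu : Λ} {X : G}
    (hX : X = a * P lam () * (b * P mu ())⁻¹)
    {r' : Option (Unit × G × Λ) → Option (Unit × G × Λ) → Prop}
    (hr' : IsCong (reesMul0 P) r')
    (hmn : r' (some ((), a, lam)) (some ((), b, mu))) (k : ℤ) :
    ∀ (g : G) (θ : Λ), r' (some ((), X ^ k * g, θ)) (some ((), g, θ)) := by
  induction k using Int.induction_on with
  | zero => intro g θ; simpa using hr'.1.refl (some ((), g, θ))
  | succ k ih =>
    intro g θ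
    have h1 := r'_step hX hr' hmn (X ^ (k : ℤ) * g) θ
    have h2 := ih g θ
    have he : X ^ ((k : ℤ) + 1) * g = X * (X ^ (k : ℤ) * g) := by
      rw [add_comm, zpow_add, zpow_one, mul_assoc]
    rw [he]
    exact hr'.1.trans h1 h2
  | pred k ih =>
    intro g θ
    have h1 := ih (X⁻¹ * g) θ
    have he : X ^ (-(k : ℤ)) * (X⁻¹ * g) = X ^ (-(k : ℤ) - 1) * g := by
      rw [← mul_assoc, sub_eq_add_neg, zpow_add, zpow_neg_one]
    rw [he] at h1
    have h2 : r' (some ((), X⁻¹ * g, θ)) (some ((), g, θ)) := by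
      have := hr'.1.symm (r'_step hX hr' hmn (X⁻¹ * g) θ)
      rwa [mul_inv_cancel_left] at this
    exact hr'.1.trans h1 h2

lemma Rrel_le {P : Λ → Unit → G} {a b : G} {lam mu : Λ} {X : G}
    (hX : X = a * P lam () * (b * P mu ())⁻¹)
    {r' : Option (Unit × G × Λ) → Option (Unit × G × Λ) → Prop}
    (hr' : IsCong (reesMul0 P) r')
    (hmn : r' (some ((), a, lam)) (some ((), b, mu)))
    {x y : Option (Unit × G × Λ)} (h : Rrel a b lam mu X x y) : r' x y := by
  have hM : ∀ w ∈ Mset a b lam mu X, r' w (some ((), a, lam)) := by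
    intro w hw
    rcases hw with ⟨k, hk⟩ | ⟨k, hk⟩
    · rw [hk]; exact r'_zstep hX hr' hmn k a lam
    · rw [hk]
      exact hr'.1.trans (r'_zstep hX hr' hmn k b mu) (hr'.1.symm hmn)
  rcases h with ⟨hx, hy⟩ | ⟨g, h, θ, k, hx, hy, hg⟩ | ⟨hx, hy⟩
  · rw [hx, hy]; exact hr'.1.refl none
  · rw [hx, hy, hg]; exact r'_zstep hX hr' hmn k h θ
  · exact hr'.1.trans (hM x hx) (hr'.1.symm (hM y hy))

end Stmt8Aux

theorem stmt8 {G Λ : Type*} [Group G] (P : Λ → Unit → G)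
    (a b : G) (lam mu : Λ)
    (m n : Option (Unit × G × Λ))
    (hm : m = some ((), a, lam)) (hn : n = some ((), b, mu)) (hmn : m ≠ n)
    (X : G) (hX : X = a * P lam () * (b * P mu ())⁻¹) :
    (∀ w, GenCong (reesMul0 P) m n m w ↔
      ((∃ k : ℤ, w = some ((), X ^ k * b, mu)) ∨
       (∃ k : ℤ, w = some ((), X ^ k * a, lam)))) ∧
    (∀ (z₀ : G) (th : Λ), ¬ GenCong (reesMul0 P) m n m (some ((), z₀, th)) →
      ∀ w, GenCong (reesMul0 P) m n (some ((), z₀, th)) w ↔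
        ∃ k : ℤ, w = some ((), X ^ k * z₀, th)) ∧
    (∀ w, GenCong (reesMul0 P) m n none w ↔ w = none) := by
  subst hm; subst hn; subst hX
  set X : G := a * P lam () * (b * P mu ())⁻¹ with hX
  have hKey : a * P lam () = X * (b * P mu ()) := by
    rw [hX]; rw [inv_mul_cancel_right]
  have hcong : IsCong (reesMul0 P) (Rrel a b lam mu X) :=
    ⟨⟨Rrel_refl a b lam mu X, Rrel_symm, Rrel_trans⟩, Rrel_compat P hKey⟩
  have hmM : (some ((), a, lam) : Option (Unit × G × Λ)) ∈ Mset a b lam mu X :=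
    Or.inl ⟨0, by simp⟩
  have hnM : (some ((), b, mu) : Option (Unit × G × Λ)) ∈ Mset a b lam mu X :=
    Or.inr ⟨0, by simp⟩
  have hrmn : Rrel a b lam mu X (some ((), a, lam)) (some ((), b, mu)) :=
    Or.inr (Or.inr ⟨hmM, hnM⟩)
  have hGen : ∀ x y, GenCong (reesMul0 P) (some ((), a, lam)) (some ((), b, mu)) x y
      ↔ Rrel a b lam mu X x y := by
    intro x y
    constructor
    · intro h; exact h _ hcong hrmn
    · intro h r' hr' hmn'; exact Rrel_le rfl hr' hmn' h
  refine ⟨?_, ?_, ?_⟩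
  · intro w
    rw [hGen]
    constructor
    · rintro (⟨hx, hy⟩ | ⟨g, h, θ, k, hx, hy, hg⟩ | ⟨hx, hy⟩)
      · cases hx
      · obtain ⟨hga, hθ⟩ : a = g ∧ lam = θ := by simpa using hx
        have hh : h = X ^ (-k) * a := by
          rw [hga, hg, ← mul_assoc, ← zpow_add]; simp
        exact Or.inr ⟨-k, by rw [hy, hh, hθ]⟩
      · rcases hy with ⟨k, hk⟩ | ⟨k, hk⟩
        · exact Or.inr ⟨k, hk⟩
        · exact Or.inl ⟨k, hk⟩
    · rintro (⟨k, hk⟩ | ⟨k, hk⟩)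
      · exact Or.inr (Or.inr ⟨hmM, Or.inr ⟨k, hk⟩⟩)
      · exact Or.inr (Or.inr ⟨hmM, Or.inl ⟨k, hk⟩⟩)
  · intro z₀ th hz w
    rw [hGen] at hz ⊢
    have hzM : (some ((), z₀, th) : Option (Unit × G × Λ)) ∉ Mset a b lam mu X := by
      intro hmem
      exact hz (Or.inr (Or.inr ⟨hmM, hmem⟩))
    constructor
    · rintro (⟨hx, hy⟩ | ⟨g, h, θ, k, hx, hy, hg⟩ | ⟨hx, hy⟩)
      · cases hx
      · obtain ⟨hgz, hθ⟩ : z₀ = g ∧ th = θ := by simpa using hx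
        have hh : h = X ^ (-k) * z₀ := by
          rw [hgz, hg, ← mul_assoc, ← zpow_add]; simp
        exact ⟨-k, by rw [hy, hh, hθ]⟩
      · exact absurd hx hzM
    · rintro ⟨k, hk⟩
      refine Or.inr (Or.inl ⟨z₀, X ^ k * z₀, th, -k, rfl, hk, ?_⟩)
      rw [← mul_assoc, ← zpow_add]; simp
  · intro w
    rw [hGen]
    constructor
    · rintro (⟨hx, hy⟩ | ⟨g, h, θ, k, hx, hy, hg⟩ | ⟨hx, hy⟩)
      · exact hy
      · cases hx
      · exact absurd hx (none_not_mem_Mset a b lam mu X)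
    · rintro rfl
      exact Or.inl ⟨rfl, rfl⟩
end

section
/- Let S = M⁰[G; {i}, Λ; P] with singleton I, and m = (i,a,λ) ≠ n = (i,b,μ) nonzero elements with X := a p_{λi}(b p_{μi})⁻¹ equal to the identity of G. Then the right congruence generated by (m,n) is exactly Δ_S ∪ {(m,n),(n,m)}. -/
theorem stmt9 {G Λ : Type*} [Group G] (P : Λ → Unit → G)
    (a b : G) (lam mu : Λ)
    (m n : Option (Unit × G × Λ))
    (hm : m = some ((), a, lam)) (hn : n = some ((), b, mu)) (hmn : m ≠ n)
    (hX : a * P lam () * (b * P mu ())⁻¹ = 1) :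
    ∀ x y, GenCong (reesMul0 P) m n x y ↔
      (x = y ∨ (x = m ∧ y = n) ∨ (x = n ∧ y = m)) := by
  have heq : a * P lam () = b * P mu () := mul_inv_eq_one.mp hX
  have key : ∀ s, reesMul0 P m s = reesMul0 P n s := by
    intro s
    subst hm hn
    cases s with
    | none => rfl
    | some p =>
      obtain ⟨⟨⟩, c, ν⟩ := p
      simp only [reesMul0, Option.some.injEq, Prod.mk.injEq, true_and]
      rw [heq]; exact ⟨rfl, trivial⟩
  set r : Option (Unit × G × Λ) → Option (Unit × G × Λ) → Prop :=
    fun x y => x = y ∨ (x = m ∧ y = n) ∨ (x = n ∧ y = m) with hr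
  have hcong : IsCong (reesMul0 P) r := by
    constructor
    · constructor
      · intro z; exact Or.inl rfl
      · intro u v h; rcases h with rfl | ⟨rfl, rfl⟩ | ⟨rfl, rfl⟩ <;> tauto
      · intro u v w h1 h2
        rcases h1 with h1 | ⟨h1a, h1b⟩ | ⟨h1a, h1b⟩ <;>
          rcases h2 with h2 | ⟨h2a, h2b⟩ | ⟨h2a, h2b⟩ <;> subst_vars <;> tauto
    · intro u v s h
      rcases h with rfl | ⟨rfl, rfl⟩ | ⟨rfl, rfl⟩
      · exact Or.inl rfl
      · exact Or.inl (key s)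
      · exact Or.inl (key s).symm
  intro x y
  constructor
  · intro h
    exact h r hcong (Or.inr (Or.inl ⟨rfl, rfl⟩))
  · intro h r' hr' hmn'
    rcases h with rfl | ⟨rfl, rfl⟩ | ⟨rfl, rfl⟩
    · exact hr'.1.refl x
    · exact hmn'
    · exact hr'.1.symm hmn'
end

section
/- Let S = I × Λ be a rectangular band and A a subdirectly irreducible right S-act. If x = a(i,λ) ≠ y = a(i,μ) for some a ∈ A, i ∈ I, λ, μ ∈ Λ, then ρ(x,y) = {(x,y),(y,x)} ∪ Δ_A, and this is the least non-diagonal congruence on A. -/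
theorem stmt10 {I Λ A : Type*} (act : A → I × Λ → A)
    (hact : ∀ (a : A) (p q : I × Λ), act (act a p) q = act a (p.1, q.2))
    (hsi : IsSI act) (a : A) (i : I) (lam mu : Λ)
    (x y : A) (hx : x = act a (i, lam)) (hy : y = act a (i, mu)) (hne : x ≠ y) :
    (∀ u v, GenCong act x y u v ↔ (u = v ∨ (u = x ∧ v = y) ∨ (u = y ∧ v = x))) ∧
    (∀ r, IsCong act r → Nondiag r → ∀ u v, GenCong act x y u v → r u v) := by
  -- x and y act identically: act x s = act y s
  have hsame : ∀ s : I × Λ, act x s = act y s := by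
    intro s
    rw [hx, hy, hact, hact]
  set r₀ : A → A → Prop :=
    fun u v => u = v ∨ (u = x ∧ v = y) ∨ (u = y ∧ v = x) with hr₀
  have hcong : IsCong act r₀ := by
    constructor
    · constructor
      · intro u; exact Or.inl rfl
      · intro u v h
        rcases h with h | ⟨h1, h2⟩ | ⟨h1, h2⟩
        · exact Or.inl h.symm
        · exact Or.inr (Or.inr ⟨h2, h1⟩)
        · exact Or.inr (Or.inl ⟨h2, h1⟩)
      · intro u v w h1 h2
        rcases h1 with h1 | ⟨ha, hb⟩ | ⟨ha, hb⟩
        · rwa [h1]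
        · subst ha; subst hb
          rcases h2 with h2 | ⟨hc, hd⟩ | ⟨hc, hd⟩
          · exact Or.inr (Or.inl ⟨rfl, h2.symm⟩)
          · exact absurd hc hne.symm
          · exact Or.inl hd.symm
        · subst ha; subst hb
          rcases h2 with h2 | ⟨hc, hd⟩ | ⟨hc, hd⟩
          · exact Or.inr (Or.inr ⟨rfl, h2.symm⟩)
          · exact Or.inl hd.symm
          · exact absurd hc hne
    · intro u v s h
      rcases h with h | ⟨ha, hb⟩ | ⟨ha, hb⟩
      · rw [h]; exact Or.inl rfl
      · subst ha; subst hb; exact Or.inl (hsame s)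
      · subst ha; subst hb; exact Or.inl (hsame s).symm
  have hr₀xy : r₀ x y := Or.inr (Or.inl ⟨rfl, rfl⟩)
  have hgen : ∀ u v, GenCong act x y u v ↔ r₀ u v := by
    intro u v
    constructor
    · intro h; exact h r₀ hcong hr₀xy
    · intro h r hr hxy
      rcases h with h | ⟨ha, hb⟩ | ⟨ha, hb⟩
      · rw [h]; exact hr.1.refl v
      · subst ha; subst hb; exact hxy
      · subst ha; subst hb; exact hr.1.symm hxy
  refine ⟨hgen, ?_⟩
  obtain ⟨ρ, hρc, hρnd, hρmin⟩ := hsi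
  have hρxy : ρ x y := by
    obtain ⟨p, q, hpq, hpne⟩ := hρnd
    have h0 := hρmin r₀ hcong ⟨x, y, hr₀xy, hne⟩ p q hpq
    rcases h0 with h | ⟨ha, hb⟩ | ⟨ha, hb⟩
    · exact absurd h hpne
    · rw [← ha, ← hb]; exact hpq
    · rw [← ha, ← hb]; exact hρc.1.symm hpq
  intro r hr hrnd u v h
  have hrxy : r x y := hρmin r hr hrnd x y hρxy
  exact h r hr hrxy
end

section
/- Let S = I × Λ be a rectangular band and A a right S-act with no zero element (no a ∈ A fixed by all of S). Then A is subdirectly irreducible if and only if A is a simple act of order 2 (|A| = 2 and A has no proper subacts). -/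
theorem stmt11 {I Λ A : Type*} (act : A → I × Λ → A)
    (hact : ∀ (a : A) (p q : I × Λ), act (act a p) q = act a (p.1, q.2))
    (hnz : ∀ a : A, ¬ IsZeroElm act a) :
    IsSI act ↔
      ((∃ x y : A, x ≠ y ∧ ∀ c : A, c = x ∨ c = y) ∧
        ∀ B : Set A, IsSubact act B → B.Nonempty → B = Set.univ) := by
  constructor
  · rintro ⟨ρ, hρ, ⟨a, b, hρab, hab⟩, hmin⟩
    have key : ∀ r, IsCong act r → Nondiag r → r a b :=
      fun r hr hn => hmin r hr hn a b hρab
    have hnz' : ∀ c : A, ∃ s, act c s ≠ c := by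
      intro c
      have h := hnz c
      unfold IsZeroElm at h
      push_neg at h
      exact h
    -- L1 : any two distinct elements with identical actions must be {a,b}
    have L1 : ∀ x y : A, x ≠ y → (∀ s, act x s = act y s) →
        ((x = a ∧ y = b) ∨ (x = b ∧ y = a)) := by
      intro x y hxy hs
      have hcong : IsCong act (fun u v => u = v ∨ (u = x ∧ v = y) ∨ (u = y ∧ v = x)) := by
        refine ⟨⟨fun u => Or.inl rfl, ?_, ?_⟩, ?_⟩
        · rintro u v (rfl | ⟨rfl, rfl⟩ | ⟨rfl, rfl⟩)
          · exact Or.inl rfl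
          · exact Or.inr (Or.inr ⟨rfl, rfl⟩)
          · exact Or.inr (Or.inl ⟨rfl, rfl⟩)
        · intro u v w h1 h2
          rcases h1 with rfl | ⟨h1a, h1b⟩ | ⟨h1a, h1b⟩ <;>
            rcases h2 with rfl | ⟨h2a, h2b⟩ | ⟨h2a, h2b⟩ <;> subst_vars <;> tauto
        · rintro u v s (rfl | ⟨rfl, rfl⟩ | ⟨rfl, rfl⟩)
          · exact Or.inl rfl
          · exact Or.inl (hs s)
          · exact Or.inl (hs s).symm
      have hr := key _ hcong ⟨x, y, Or.inr (Or.inl ⟨rfl, rfl⟩), hxy⟩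
      rcases hr with h | ⟨h1, h2⟩ | ⟨h1, h2⟩
      · exact absurd h hab
      · exact Or.inl ⟨h1.symm, h2.symm⟩
      · exact Or.inr ⟨h2.symm, h1.symm⟩
    -- Rees congruence: any subact with two distinct elements contains a and b
    have rees : ∀ B : Set A, (∀ z ∈ B, ∀ s, act z s ∈ B) →
        (∃ u ∈ B, ∃ v ∈ B, u ≠ v) → a ∈ B ∧ b ∈ B := by
      rintro B hB ⟨u, hu, v, hv, huv⟩
      have hcong : IsCong act (fun x y => x = y ∨ (x ∈ B ∧ y ∈ B)) := by
        refine ⟨⟨fun _ => Or.inl rfl, ?_, ?_⟩, ?_⟩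
        · rintro x y (rfl | ⟨h1, h2⟩)
          · exact Or.inl rfl
          · exact Or.inr ⟨h2, h1⟩
        · rintro x y z (rfl | ⟨h1, h2⟩) (rfl | ⟨h3, h4⟩) <;> tauto
        · rintro x y s (rfl | ⟨h1, h2⟩)
          · exact Or.inl rfl
          · exact Or.inr ⟨hB _ h1 s, hB _ h2 s⟩
      have hr := key _ hcong ⟨u, v, Or.inr ⟨hu, hv⟩, huv⟩
      rcases hr with h | h
      · exact absurd h hab
      · exact h
    -- orbit subacts give: b = act a s₁, a = act b s₂
    have orbit : ∀ c : A, a ∈ ({c} ∪ {z | ∃ s, act c s = z} : Set A) ∧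
        b ∈ ({c} ∪ {z | ∃ s, act c s = z} : Set A) := by
      intro c
      apply rees
      · rintro z (rfl | ⟨t, rfl⟩) s
        · exact Or.inr ⟨s, rfl⟩
        · exact Or.inr ⟨(t.1, s.2), (hact c t s).symm⟩
      · obtain ⟨s₀, hs₀⟩ := hnz' c
        exact ⟨act c s₀, Or.inr ⟨s₀, rfl⟩, c, Or.inl rfl, hs₀⟩
    obtain ⟨s₁, hs₁⟩ : ∃ s, act a s = b := by
      rcases (orbit a).2 with h | ⟨s, hs⟩
      · exact absurd h.symm hab
      · exact ⟨s, hs⟩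
    obtain ⟨s₂, hs₂⟩ : ∃ s, act b s = a := by
      rcases (orbit b).1 with h | ⟨s, hs⟩
      · exact absurd h hab
      · exact ⟨s, hs⟩
    -- a is fixed by (s₁.1, s₂.2)
    have haa : act a (s₁.1, s₂.2) = a := by
      rw [← hs₂, ← hs₁, hact]
    -- a's action depends only on the column
    have ha_all : ∀ s : I × Λ, act a s = act a (s₁.1, s.2) := by
      intro s
      conv_lhs => rw [← haa, hact]
    -- b has the same action as a
    have hb_all : ∀ s : I × Λ, act b s = act a (s₁.1, s.2) := by
      intro s
      rw [← hs₁, hact]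
    -- every element acts like a
    have main : ∀ c : A, ∀ s : I × Λ, act c s = act a s := by
      intro c s
      -- elements of the row-m orbit of c are in {a,b}
      have hX : ∀ m : I, ∀ ξ : Λ, act c (m, ξ) = a ∨ act c (m, ξ) = b := by
        intro m ξ
        by_cases hconst : ∀ ξ' : Λ, act c (m, ξ') = act c (m, ξ)
        · exfalso
          obtain ⟨t, ht⟩ := hnz' (act c (m, ξ))
          apply ht
          rw [hact]
          exact hconst t.2
        · push_neg at hconst
          obtain ⟨ξ', hξ'⟩ := hconst
          have heta : ∀ t, act (act c (m, ξ')) t = act (act c (m, ξ)) t := by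
            intro t; rw [hact, hact]
          rcases L1 _ _ hξ' heta with ⟨h1, h2⟩ | ⟨h1, h2⟩
          · exact Or.inr h2
          · exact Or.inl h2
      -- conclude for the given s
      have h1 : act c s = act (act c (s.1, s₁.2)) (s.1, s.2) := by
        rw [hact]
      rcases hX s.1 s₁.2 with h | h
      · rw [h1, h, Prod.mk.eta]
      · rw [h1, h, Prod.mk.eta, hb_all s, ← ha_all s]
    have htwo : ∀ c : A, c = a ∨ c = b := by
      intro c
      by_cases hc : c = a
      · exact Or.inl hc
      · rcases L1 c a hc (fun s => main c s) with ⟨h1, h2⟩ | ⟨h1, h2⟩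
        · exact absurd h2 hab
        · exact Or.inr h1
    refine ⟨⟨a, b, hab, htwo⟩, ?_⟩
    intro B hB ⟨z, hz⟩
    obtain ⟨s₀, hs₀⟩ := hnz' z
    have hz' : act z s₀ ∈ B := hB z hz s₀
    have habB : a ∈ B ∧ b ∈ B := by
      rcases htwo z with rfl | rfl <;> rcases htwo (act z s₀) with h | h <;>
        first
          | exact absurd h hs₀
          | (constructor <;> first | exact hz | exact h ▸ hz')
    ext x
    simp only [Set.mem_univ, iff_true]
    rcases htwo x with rfl | rfl
    · exact habB.1
    · exact habB.2
  · rintro ⟨⟨x, y, hxy, hall⟩, -⟩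
    refine ⟨fun _ _ => True, ⟨⟨fun _ => trivial, fun _ => trivial, fun _ _ => trivial⟩,
      fun _ _ _ _ => trivial⟩, ⟨x, y, trivial, hxy⟩, ?_⟩
    intro r' hr' ⟨u, v, huv, hne⟩ p q _
    have hrxy : r' x y ∧ r' y x := by
      rcases hall u with rfl | rfl <;> rcases hall v with rfl | rfl
      · exact absurd rfl hne
      · exact ⟨huv, hr'.1.symm huv⟩
      · exact ⟨hr'.1.symm huv, huv⟩
      · exact absurd rfl hne
    rcases hall p with rfl | rfl <;> rcases hall q with rfl | rfl
    · exact hr'.1.refl _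
    · exact hrxy.1
    · exact hrxy.2
    · exact hr'.1.refl _
end

section
/- Let S = I × Λ be a rectangular band and A a subdirectly irreducible right S-act with no zero element. Then there exist distinct x, y ∈ A and a partition {Λ₁, Λ₂} of Λ such that a(i,λ) = x for all a ∈ A, i ∈ I, λ ∈ Λ₁, and a(i,λ) = y for all a ∈ A, i ∈ I, λ ∈ Λ₂; moreover A = {x, y}. -/
theorem stmt12 {I Λ A : Type*} (act : A → I × Λ → A)
    (hact : ∀ (a : A) (p q : I × Λ), act (act a p) q = act a (p.1, q.2))
    (hsi : IsSI act) (hnz : ∀ a : A, ¬ IsZeroElm act a) :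
    ∃ x y : A, x ≠ y ∧
      ∃ Λ₁ Λ₂ : Set Λ, Λ₁.Nonempty ∧ Λ₂.Nonempty ∧
        Λ₁ ∪ Λ₂ = Set.univ ∧ Λ₁ ∩ Λ₂ = ∅ ∧
        (∀ (a : A) (i : I), ∀ l ∈ Λ₁, act a (i, l) = x) ∧
        (∀ (a : A) (i : I), ∀ l ∈ Λ₂, act a (i, l) = y) ∧
        (∀ c : A, c = x ∨ c = y) := by
  obtain ⟨ρ, hρc, ⟨u₀, v₀, huv, hneq⟩, hmin⟩ := hsi
  -- key lemma: if two distinct elements act identically, they are {u₀, v₀}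
  have pair : ∀ u v : A, u ≠ v → (∀ s, act u s = act v s) →
      (u₀ = u ∧ v₀ = v) ∨ (u₀ = v ∧ v₀ = u) := by
    intro u v hne heq
    have hc : IsCong act (fun x y => x = y ∨ ((x = u ∨ x = v) ∧ (y = u ∨ y = v))) := by
      refine ⟨⟨fun x => Or.inl rfl, ?_, ?_⟩, ?_⟩
      · rintro x y (rfl | ⟨h1, h2⟩)
        · exact Or.inl rfl
        · exact Or.inr ⟨h2, h1⟩
      · rintro x y z (rfl | ⟨h1, h2⟩) h
        · exact h
        · rcases h with rfl | ⟨h3, h4⟩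
          · exact Or.inr ⟨h1, h2⟩
          · exact Or.inr ⟨h1, h4⟩
      · rintro a b s (rfl | ⟨h1, h2⟩)
        · exact Or.inl rfl
        · refine Or.inl ?_
          have e1 : act a s = act u s := by
            rcases h1 with rfl | rfl
            · rfl
            · exact (heq s).symm
          have e2 : act b s = act u s := by
            rcases h2 with rfl | rfl
            · rfl
            · exact (heq s).symm
          rw [e1, e2]
    have h := hmin _ hc ⟨u, v, Or.inr ⟨Or.inl rfl, Or.inr rfl⟩, hne⟩ u₀ v₀ huv
    rcases h with h | ⟨h1, h2⟩
    · exact absurd h hneq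
    · rcases h1 with rfl | rfl
      · rcases h2 with h2 | rfl
        · exact absurd h2.symm hneq
        · exact Or.inl ⟨rfl, rfl⟩
      · rcases h2 with rfl | h2
        · exact Or.inr ⟨rfl, rfl⟩
        · exact absurd h2.symm hneq
  obtain ⟨s₀, hs₀⟩ : ∃ s, act u₀ s ≠ u₀ := by
    have := hnz u₀
    simpa [IsZeroElm, not_forall] using this
  -- the map l ↦ act a (i, l) is nonconstant
  have noncst : ∀ (a : A) (i : I), ∃ l m : Λ, act a (i, l) ≠ act a (i, m) := by
    intro a i
    by_contra h
    push_neg at h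
    refine hnz (act a (i, s₀.2)) (fun s => ?_)
    rw [hact]
    exact h _ _
  -- every value of the action is u₀ or v₀
  have mem : ∀ (a : A) (i : I) (l : Λ), act a (i, l) = u₀ ∨ act a (i, l) = v₀ := by
    intro a i l
    obtain ⟨m, n, hmn⟩ := noncst a i
    have key : ∀ m' : Λ, act a (i, l) ≠ act a (i, m') →
        act a (i, l) = u₀ ∨ act a (i, l) = v₀ := by
      intro m' hne
      have heq : ∀ s, act (act a (i, l)) s = act (act a (i, m')) s := by
        intro s
        rw [hact, hact]
      rcases pair _ _ hne heq with ⟨h1, _⟩ | ⟨_, h2⟩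
      · exact Or.inl h1.symm
      · exact Or.inr h2.symm
    by_cases h : act a (i, l) = act a (i, m)
    · exact key n (by rw [h]; exact hmn)
    · exact key m h
  by_cases hsplit : ∃ (l : Λ) (a : A) (i : I) (b : A) (j : I), act a (i, l) ≠ act b (j, l)
  · exfalso
    obtain ⟨l, a, i, b, j, hab⟩ := hsplit
    have hx : ∃ (c : A) (k : I), act c (k, l) = u₀ := by
      rcases mem a i l with h | h
      · exact ⟨a, i, h⟩
      · rcases mem b j l with h' | h'
        · exact ⟨b, j, h'⟩
        · exact absurd (h.trans h'.symm) hab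
    have hy : ∃ (c : A) (k : I), act c (k, l) = v₀ := by
      rcases mem a i l with h | h
      · rcases mem b j l with h' | h'
        · exact absurd (h.trans h'.symm) hab
        · exact ⟨b, j, h'⟩
      · exact ⟨a, i, h⟩
    obtain ⟨cx, kx, hcx⟩ := hx
    obtain ⟨cy, ky, hcy⟩ := hy
    have fx : ∀ k, act u₀ (k, l) = u₀ := by
      intro k
      rw [← hcx, hact]
    have fy : ∀ k, act v₀ (k, l) = v₀ := by
      intro k
      rw [← hcy, hact]
    have hκc : IsCong act (fun x y => ∀ k, act x (k, l) = act y (k, l)) := by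
      refine ⟨⟨fun x k => rfl, fun h k => (h k).symm, fun h1 h2 k => (h1 k).trans (h2 k)⟩, ?_⟩
      intro a' b' s h k
      rw [hact, hact]
      exact h s.1
    have hdiag : ∀ x y, (∀ k, act x (k, l) = act y (k, l)) → x = y := by
      by_contra h
      push_neg at h
      obtain ⟨x, y, hxy', hne'⟩ := h
      have h1 := hmin _ hκc ⟨x, y, hxy', hne'⟩ u₀ v₀ huv kx
      rw [fx, fy] at h1
      exact hneq h1
    have indep : ∀ (x : A) (j' : I) (m : Λ), act x (j', m) = act x (j', l) := by
      intro x j' m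
      apply hdiag
      intro k
      rw [hact, hact]
    refine hnz u₀ (fun s => ?_)
    have h1 := indep u₀ s.1 s.2
    rw [fx s.1] at h1
    exact h1
  push_neg at hsplit
  have both : (∃ l, act u₀ (s₀.1, l) = u₀) ∧ (∃ l, act u₀ (s₀.1, l) = v₀) := by
    obtain ⟨m, n, hmn⟩ := noncst u₀ s₀.1
    rcases mem u₀ s₀.1 m with h1 | h1 <;> rcases mem u₀ s₀.1 n with h2 | h2
    · exact absurd (h1.trans h2.symm) hmn
    · exact ⟨⟨m, h1⟩, ⟨n, h2⟩⟩
    · exact ⟨⟨n, h2⟩, ⟨m, h1⟩⟩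
    · exact absurd (h1.trans h2.symm) hmn
  refine ⟨u₀, v₀, hneq, {l | act u₀ (s₀.1, l) = u₀}, {l | act u₀ (s₀.1, l) = v₀},
    both.1, both.2, ?_, ?_, ?_, ?_, ?_⟩
  · exact Set.eq_univ_iff_forall.mpr (fun l => mem u₀ s₀.1 l)
  · refine Set.eq_empty_iff_forall_notMem.mpr ?_
    rintro l ⟨h1, h2⟩
    exact hneq ((h1 : act u₀ (s₀.1, l) = u₀).symm.trans h2)
  · intro a i l hl
    exact (hsplit l a i u₀ s₀.1).trans hl
  · intro a i l hl
    exact (hsplit l a i u₀ s₀.1).trans hl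
  · intro c
    by_cases h : c = u₀
    · exact Or.inl h
    · right
      have heq : ∀ s, act c s = act u₀ s :=
        fun s => (hsplit s.2 c s.1 u₀ s₀.1).trans (hsplit s.2 u₀ s.1 u₀ s₀.1).symm
      rcases pair c u₀ h heq with ⟨h1, _⟩ | ⟨_, h2⟩
      · exact absurd h1.symm h
      · exact h2.symm
end

section
/- Let S = I × Λ be a rectangular band and A a right S-act with no zero elements. Then A is uniform if and only if: there is a subact K such that aS = K for every a ∈ A (so K = Ker A), and for any pair of distinct elements x, y ∈ A not both in K, there exists s ∈ S with xs ≠ ys. -/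
theorem stmt16 {I Λ A : Type*} (act : A → I × Λ → A)
    (hact : ∀ (a : A) (p q : I × Λ), act (act a p) q = act a (p.1, q.2))
    (hnz : ∀ a : A, ¬ IsZeroElm act a) :
    IsUniformAct act ↔ ∃ K : Set A,
      (∀ a : A, {w | ∃ s, act a s = w} = K) ∧
      (∀ x y : A, x ≠ y → ¬(x ∈ K ∧ y ∈ K) → ∃ s, act x s ≠ act y s) := by
  constructor
  · intro hu
    by_cases hA : Nonempty A
    · obtain ⟨a₀⟩ := hA
      -- any two nonempty subacts intersect
      have inter : ∀ B C : Set A, IsSubact act B → IsSubact act C →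
          B.Nonempty → C.Nonempty → (B ∩ C).Nonempty := by
        intro B C hB hC ⟨b, hb⟩ ⟨c, hc⟩
        by_contra hdisj
        have hbz := hnz b
        unfold IsZeroElm at hbz
        push_neg at hbz
        obtain ⟨s, hs⟩ := hbz
        set r : A → A → Prop := fun x y => x = y ∨ (x ∈ B ∧ y ∈ B) with hrdef
        have hcong : IsCong act r := by
          refine ⟨⟨fun x => Or.inl rfl, ?_, ?_⟩, ?_⟩
          · rintro x y (rfl | ⟨h1, h2⟩)
            · exact Or.inl rfl
            · exact Or.inr ⟨h2, h1⟩
          · rintro x y z (rfl | ⟨h1, h2⟩) hyz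
            · exact hyz
            · rcases hyz with rfl | ⟨h3, h4⟩
              · exact Or.inr ⟨h1, h2⟩
              · exact Or.inr ⟨h1, h4⟩
          · rintro x y t (rfl | ⟨h1, h2⟩)
            · exact Or.inl rfl
            · exact Or.inr ⟨hB x h1 t, hB y h2 t⟩
        have hlarge := hu C hC ⟨c, hc, hnz c⟩ r hcong ?_ b (act b s)
            (Or.inr ⟨hb, hB b hb s⟩)
        · exact hs hlarge.symm
        · rintro x hx y hy (rfl | ⟨h1, h2⟩)
          · rfl
          · exact absurd ⟨x, h1, hx⟩ hdisj
      -- key equality: all "rows" coincide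
      have keyeq : ∀ (a b : A) (i j : I) (μ : Λ), act a (i, μ) = act b (j, μ) := by
        intro a b i j μ
        have hBsub : IsSubact act {w | ∃ ν : Λ, act a (i, ν) = w} := by
          rintro w ⟨ν, rfl⟩ t
          exact ⟨t.2, by rw [hact]⟩
        have hCsub : IsSubact act {w | ∃ ν : Λ, act b (j, ν) = w} := by
          rintro w ⟨ν, rfl⟩ t
          exact ⟨t.2, by rw [hact]⟩
        obtain ⟨w, ⟨μ₀, hμ₀⟩, ⟨ν₀, hν₀⟩⟩ := inter _ _ hBsub hCsub
          ⟨act a (i, μ), μ, rfl⟩ ⟨act b (j, μ), μ, rfl⟩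
        calc act a (i, μ) = act (act a (i, μ₀)) (i, μ) := by rw [hact]
          _ = act (act b (j, ν₀)) (i, μ) := by rw [hμ₀, hν₀]
          _ = act b (j, μ) := by rw [hact]
      refine ⟨{w | ∃ s, act a₀ s = w}, ?_, ?_⟩
      · intro a
        ext w
        constructor
        · rintro ⟨⟨i, μ⟩, rfl⟩
          exact ⟨(i, μ), (keyeq a₀ a i i μ).symm ▸ rfl⟩
        · rintro ⟨⟨i, μ⟩, rfl⟩
          exact ⟨(i, μ), keyeq a a₀ i i μ ▸ rfl⟩
      · intro x y hxy hnotboth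
        by_contra hall
        push_neg at hall
        -- one of x, y is outside K
        set K := {w | ∃ s, act a₀ s = w} with hKdef
        have horb : ∀ a : A, ∀ s : I × Λ, act a s ∈ K := by
          rintro a ⟨i, μ⟩
          exact ⟨(i, μ), keyeq a₀ a i i μ⟩
        have hKsub : IsSubact act K := by
          rintro w ⟨s, rfl⟩ t
          exact horb _ _
        -- the congruence identifying x and y
        set r : A → A → Prop := fun u v => u = v ∨ (u = x ∧ v = y) ∨ (u = y ∧ v = x)
          with hrdef
        have hcong : IsCong act r := by
          refine ⟨⟨fun u => Or.inl rfl, ?_, ?_⟩, ?_⟩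
          · rintro u v (rfl | ⟨rfl, rfl⟩ | ⟨rfl, rfl⟩)
            · exact Or.inl rfl
            · exact Or.inr (Or.inr ⟨rfl, rfl⟩)
            · exact Or.inr (Or.inl ⟨rfl, rfl⟩)
          · rintro u v w (rfl | ⟨rfl, rfl⟩ | ⟨rfl, rfl⟩) h
            · exact h
            · rcases h with rfl | ⟨h1, rfl⟩ | ⟨-, rfl⟩
              · exact Or.inr (Or.inl ⟨rfl, rfl⟩)
              · exact absurd h1.symm hxy
              · exact Or.inl rfl
            · rcases h with rfl | ⟨-, rfl⟩ | ⟨h1, rfl⟩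
              · exact Or.inr (Or.inr ⟨rfl, rfl⟩)
              · exact Or.inl rfl
              · exact absurd h1 hxy
          · rintro u v t (rfl | ⟨rfl, rfl⟩ | ⟨rfl, rfl⟩)
            · exact Or.inl rfl
            · exact Or.inl (hall t)
            · exact Or.inl (hall t).symm
        rcases not_and_or.mp hnotboth with hxK | hyK
        · -- x ∉ K, take B = K ∪ {y}
          have hBsub : IsSubact act (K ∪ {y}) := by
            rintro w (hw | rfl) t
            · exact Or.inl (hKsub w hw t)
            · exact Or.inl (horb _ _)
          have := hu (K ∪ {y}) hBsub ⟨y, Or.inr rfl, hnz y⟩ r hcong ?_ x y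
            (Or.inr (Or.inl ⟨rfl, rfl⟩))
          · exact hxy this
          · rintro u hu' v hv' (rfl | ⟨rfl, rfl⟩ | ⟨rfl, rfl⟩)
            · rfl
            · rcases hu' with h | h
              · exact absurd h hxK
              · exact absurd h hxy
            · rcases hv' with h | h
              · exact absurd h hxK
              · exact absurd h hxy
        · -- y ∉ K, take B = K ∪ {x}
          have hBsub : IsSubact act (K ∪ {x}) := by
            rintro w (hw | rfl) t
            · exact Or.inl (hKsub w hw t)
            · exact Or.inl (horb _ _)
          have := hu (K ∪ {x}) hBsub ⟨x, Or.inr rfl, hnz x⟩ r hcong ?_ x y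
            (Or.inr (Or.inl ⟨rfl, rfl⟩))
          · exact hxy this
          · rintro u hu' v hv' (rfl | ⟨rfl, rfl⟩ | ⟨rfl, rfl⟩)
            · rfl
            · rcases hv' with h | h
              · exact absurd h hyK
              · exact absurd h.symm hxy
            · rcases hu' with h | h
              · exact absurd h hyK
              · exact absurd h.symm hxy
    · -- A is empty
      refine ⟨∅, fun a => absurd ⟨a⟩ hA, fun x => absurd ⟨x⟩ hA⟩
  · rintro ⟨K, hK, hsep⟩ B hB ⟨x₀, hx₀, _⟩ r hr htriv x y hrxy
    have hKB : K ⊆ B := by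
      intro k hk
      rw [← hK x₀] at hk
      obtain ⟨s, rfl⟩ := hk
      exact hB x₀ hx₀ s
    by_cases hxy : x = y
    · exact hxy
    · by_cases hboth : x ∈ K ∧ y ∈ K
      · exact htriv x (hKB hboth.1) y (hKB hboth.2) hrxy
      · obtain ⟨s, hs⟩ := hsep x y hxy hboth
        have hxs : act x s ∈ K := (hK x) ▸ ⟨s, rfl⟩
        have hys : act y s ∈ K := (hK y) ▸ ⟨s, rfl⟩
        exact absurd (htriv _ (hKB hxs) _ (hKB hys) (hr.2 x y s hrxy)) hs
end

section
/- Let S = I × Λ be a rectangular band and A a right S-act with a unique zero element θ and more than two elements. Then A is uniform if and only if there is a subact K (the kernel) consisting of nonzero elements such that for every nonzero a ∈ A, aS = K or aS = K ∪ {θ}, and for any pair of distinct elements x, y not both in K there exists s ∈ S with xs ≠ ys. -/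
theorem stmt17 {I Λ A : Type*} (act : A → I × Λ → A)
    (hact : ∀ (a : A) (p q : I × Λ), act (act a p) q = act a (p.1, q.2))
    (θ : A) (hz : IsZeroElm act θ) (huniq : ∀ z : A, IsZeroElm act z → z = θ)
    (h2 : ∃ a b c : A, a ≠ b ∧ a ≠ c ∧ b ≠ c) :
    IsUniformAct act ↔ ∃ K : Set A, IsSubact act K ∧ θ ∉ K ∧
      (∀ a : A, a ≠ θ →
        ({w | ∃ s, act a s = w} = K ∨ {w | ∃ s, act a s = w} = K ∪ {θ})) ∧
      (∀ x y : A, x ≠ y → ¬(x ∈ K ∧ y ∈ K) → ∃ s, act x s ≠ act y s) := by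
    classical
  obtain ⟨a0, b0, c0, hab, hac, hbc⟩ := h2
  have hzer : ∀ {x : A}, x ≠ θ → ¬ IsZeroElm act x := fun hx hzx => hx (huniq _ hzx)
  obtain ⟨p, q, hpθ, hqθ, hpq⟩ : ∃ p q : A, p ≠ θ ∧ q ≠ θ ∧ p ≠ q := by
    by_cases h1 : a0 = θ
    · exact ⟨b0, c0, fun h => hab (h1.trans h.symm), fun h => hac (h1.trans h.symm), hbc⟩
    · by_cases h2 : b0 = θ
      · exact ⟨a0, c0, h1, fun h => hbc (h2.trans h.symm), hac⟩
      · exact ⟨a0, b0, h1, h2, hab⟩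
  have F1 : ∀ {a b : A} {t : I × Λ}, act a t = b → act b t = b := by
    intro a b t h; subst h; exact hact a t t
  have F2 : ∀ {a b u : A} {t s : I × Λ}, act a t = b → act b s = u →
      ∀ v, act u v = act b v := by
    intro a b u t s hb hu v
    subst hb; subst hu
    calc act (act (act a t) s) v = act (act a t) (s.1, v.2) := hact _ _ _
      _ = act a (t.1, v.2) := hact a t (s.1, v.2)
      _ = act (act a t) v := (hact a t v).symm
  have hsub : ∀ a : A, IsSubact act {w | ∃ s, act a s = w} := by
    intro a u hu s
    obtain ⟨t, ht⟩ := hu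
    exact ⟨(t.1, s.2), by rw [← ht]; exact (hact a t s).symm⟩
  have pairCong : ∀ x y : A, x ≠ y → (∀ s, act x s = act y s) →
      IsCong act (fun u v => u = v ∨ (u = x ∧ v = y) ∨ (u = y ∧ v = x)) := by
    intro x y hxy hs
    refine ⟨⟨fun u => Or.inl rfl, ?_, ?_⟩, ?_⟩
    · rintro u v (rfl | ⟨rfl, rfl⟩ | ⟨rfl, rfl⟩)
      · exact Or.inl rfl
      · exact Or.inr (Or.inr ⟨rfl, rfl⟩)
      · exact Or.inr (Or.inl ⟨rfl, rfl⟩)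
    · rintro u v w (rfl | ⟨rfl, rfl⟩ | ⟨rfl, rfl⟩) h'
      · exact h'
      · rcases h' with rfl | ⟨h1, rfl⟩ | ⟨-, rfl⟩
        · exact Or.inr (Or.inl ⟨rfl, rfl⟩)
        · exact absurd h1.symm hxy
        · exact Or.inl rfl
      · rcases h' with rfl | ⟨-, rfl⟩ | ⟨h1, rfl⟩
        · exact Or.inr (Or.inr ⟨rfl, rfl⟩)
        · exact Or.inl rfl
        · exact absurd h1 hxy
    · rintro u v s (rfl | ⟨rfl, rfl⟩ | ⟨rfl, rfl⟩)
      · exact Or.inl rfl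
      · exact Or.inl (hs s)
      · exact Or.inl (hs s).symm
  constructor
  · intro hU
    have orbEq : ∀ b c : A, b ≠ θ → c ≠ θ → (∃ a t, act a t = b) → (∃ a t, act a t = c) →
        {w | ∃ s, act b s = w} = {w | ∃ s, act c s = w} := by
      rintro b c hbθ hcθ ⟨ab, tb, hb⟩ ⟨ac, tc, hc⟩
      obtain ⟨s1, hs1⟩ : ∃ s, act b s ≠ b := by
        by_contra h; push_neg at h; exact hbθ (huniq b h)
      have hrc : IsCong act
          (fun u v => u = v ∨ ((∃ s, act b s = u) ∧ (∃ s, act b s = v))) := by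
        refine ⟨⟨fun u => Or.inl rfl, ?_, ?_⟩, ?_⟩
        · rintro u v (rfl | ⟨h1, h2⟩)
          · exact Or.inl rfl
          · exact Or.inr ⟨h2, h1⟩
        · rintro u v w (rfl | ⟨h1, h2⟩) h'
          · exact h'
          · rcases h' with rfl | ⟨h3, h4⟩
            · exact Or.inr ⟨h1, h2⟩
            · exact Or.inr ⟨h1, h4⟩
        · rintro u v s (rfl | ⟨⟨t1, h1⟩, ⟨t2, h2⟩⟩)
          · exact Or.inl rfl
          · refine Or.inr ⟨⟨(t1.1, s.2), ?_⟩, ⟨(t2.1, s.2), ?_⟩⟩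
            · rw [← h1]; exact (hact b t1 s).symm
            · rw [← h2]; exact (hact b t2 s).symm
      have hnz : ∃ x ∈ {w | ∃ s, act c s = w}, ¬ IsZeroElm act x :=
        ⟨c, ⟨tc, F1 hc⟩, hzer hcθ⟩
      have hne : ¬ (∀ x ∈ {w | ∃ s, act c s = w}, ∀ y ∈ {w | ∃ s, act c s = w},
          (fun u v => u = v ∨ ((∃ s, act b s = u) ∧ (∃ s, act b s = v))) x y → x = y) := by
        intro H
        have := hU _ (hsub c) hnz _ hrc H b (act b s1)
          (Or.inr ⟨⟨tb, F1 hb⟩, ⟨s1, rfl⟩⟩)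
        exact hs1 this.symm
      push_neg at hne
      obtain ⟨u, hu, v, hv, huv, hune⟩ := hne
      rcases huv with rfl | ⟨⟨su, hsu⟩, -⟩
      · exact absurd rfl hune
      obtain ⟨sc, hsc⟩ := hu
      have e1 : ∀ w, act u w = act b w := F2 hb hsu
      have e2 : ∀ w, act u w = act c w := F2 hc hsc
      ext w
      constructor
      · rintro ⟨s, hs⟩; exact ⟨s, by rw [← e2, e1]; exact hs⟩
      · rintro ⟨s, hs⟩; exact ⟨s, by rw [← e1, e2]; exact hs⟩
    obtain ⟨m, hmθ, hmM⟩ : ∃ m : A, m ≠ θ ∧ ∃ a t, act a t = m := by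
      by_contra h
      push_neg at h
      have hall : ∀ (a : A) (t : I × Λ), act a t = θ := by
        intro a t
        by_contra h'
        exact h' (h (act a t) h' a t rfl).elim
      have hcong := pairCong p q hpq (fun s => (hall p s).trans (hall q s).symm)
      have hBsub : IsSubact act {p, θ} := by
        intro u hu s
        rcases hu with rfl | rfl
        · exact Or.inr (hall u s)
        · exact Or.inr (hz s)
      have hdiag : ∀ x ∈ ({p, θ} : Set A), ∀ y ∈ ({p, θ} : Set A),
          (fun u v => u = v ∨ (u = p ∧ v = q) ∨ (u = q ∧ v = p)) x y → x = y := by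
        rintro u hu v hv (rfl | ⟨rfl, rfl⟩ | ⟨rfl, rfl⟩)
        · rfl
        · rcases hv with rfl | rfl
          · exact absurd rfl hpq
          · exact absurd rfl hqθ
        · rcases hu with rfl | rfl
          · exact absurd rfl (Ne.symm hpq)
          · exact absurd rfl hqθ
      have := hU _ hBsub ⟨p, Or.inl rfl, hzer hpθ⟩ _ hcong hdiag p q
        (Or.inr (Or.inl ⟨rfl, rfl⟩))
      exact hpq this
    obtain ⟨am, tm, htm⟩ := hmM
    have hmK : m ∈ {w | ∃ s, act m s = w} := ⟨tm, F1 htm⟩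
    have hKθ : θ ∉ {w | ∃ s, act m s = w} := by
      rintro ⟨s, hs⟩
      have e : ∀ w, act θ w = act m w := F2 htm hs
      obtain ⟨t', h'⟩ := hmK
      exact hmθ (h' ▸ ((e t').symm.trans (hz t')))
    have claim2 : ∀ a : A, a ≠ θ → ∃ s, act a s ≠ θ := by
      intro a haθ
      by_contra h
      push_neg at h
      have hcong := pairCong a θ haθ (fun s => (h s).trans (hz s).symm)
      have hdiag : ∀ x ∈ {w | ∃ s, act m s = w}, ∀ y ∈ {w | ∃ s, act m s = w},
          (fun u v => u = v ∨ (u = a ∧ v = θ) ∨ (u = θ ∧ v = a)) x y → x = y := by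
        rintro u hu v hv (rfl | ⟨rfl, rfl⟩ | ⟨rfl, rfl⟩)
        · rfl
        · exact absurd hv hKθ
        · exact absurd hu hKθ
      exact haθ (hU _ (hsub m) ⟨m, hmK, hzer hmθ⟩ _ hcong hdiag a θ
        (Or.inr (Or.inl ⟨rfl, rfl⟩)))
    refine ⟨{w | ∃ s, act m s = w}, hsub m, hKθ, ?_, ?_⟩
    · intro a haθ
      obtain ⟨s1, hs1⟩ := claim2 a haθ
      have hx : {w | ∃ s, act (act a s1) s = w} = {w | ∃ s, act m s = w} :=
        orbEq (act a s1) m hs1 hmθ ⟨a, s1, rfl⟩ ⟨am, tm, htm⟩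
      have hKa : {w | ∃ s, act m s = w} ⊆ {w | ∃ s, act a s = w} := by
        rw [← hx]
        rintro k ⟨t, ht⟩
        exact ⟨(s1.1, t.2), by rw [← ht]; exact (hact a s1 t).symm⟩
      have hsubK : {w | ∃ s, act a s = w} ⊆ {w | ∃ s, act m s = w} ∪ {θ} := by
        rintro w ⟨t, ht⟩
        by_cases hw : w = θ
        · exact Or.inr hw
        · have hw2 : {w' | ∃ s, act w s = w'} = {w' | ∃ s, act m s = w'} :=
            orbEq w m hw hmθ ⟨a, t, ht⟩ ⟨am, tm, htm⟩
          exact Or.inl (hw2 ▸ (⟨t, F1 ht⟩ : w ∈ {w' | ∃ s, act w s = w'}))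
      by_cases hθa : θ ∈ {w | ∃ s, act a s = w}
      · right
        refine Set.Subset.antisymm hsubK ?_
        rintro w (hw | hw)
        · exact hKa hw
        · have : w = θ := hw
          exact this ▸ hθa
      · left
        refine Set.Subset.antisymm ?_ hKa
        intro w hw'
        rcases hsubK hw' with h | h
        · exact h
        · have : w = θ := h
          exact absurd (this ▸ hw') hθa
    · intro x y hxy hnb
      by_contra h
      push_neg at h
      have hcong := pairCong x y hxy h
      have hdiag : ∀ u ∈ {w | ∃ s, act m s = w}, ∀ v ∈ {w | ∃ s, act m s = w},
          (fun u v => u = v ∨ (u = x ∧ v = y) ∨ (u = y ∧ v = x)) u v → u = v := by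
        rintro u hu v hv (rfl | ⟨rfl, rfl⟩ | ⟨rfl, rfl⟩)
        · rfl
        · exact absurd ⟨hu, hv⟩ hnb
        · exact absurd ⟨hv, hu⟩ hnb
      exact hxy (hU _ (hsub m) ⟨m, hmK, hzer hmθ⟩ _ hcong hdiag x y
        (Or.inr (Or.inl ⟨rfl, rfl⟩)))
  · rintro ⟨K, hKsub, hKθ, horb, hsep⟩
    intro B hBsub hBnz r hrc hdiag x y hrxy
    by_contra hxy
    obtain ⟨b, hbB, hbz⟩ := hBnz
    have hbθ : b ≠ θ := fun h => hbz (h ▸ hz)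
    have hKne : K.Nonempty := by
      by_contra h
      rw [Set.not_nonempty_iff_eq_empty] at h
      subst h
      have hP : ∀ z : A, z ≠ θ → ∀ s, act z s = θ := by
        intro z hzθ s
        have hmem : act z s ∈ {w | ∃ t, act z t = w} := ⟨s, rfl⟩
        rcases horb z hzθ with h1 | h1
        · rw [h1] at hmem; exact absurd hmem (Set.notMem_empty _)
        · rw [h1] at hmem; simpa using hmem
      obtain ⟨s, hs⟩ := hsep p q hpq (fun h' => Set.notMem_empty p h'.1)
      exact hs ((hP p hpθ s).trans (hP q hqθ s).symm)
    have horbK : ∀ k ∈ K, {w | ∃ s, act k s = w} = K := by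
      intro k hk
      have hkθ : k ≠ θ := fun h => hKθ (h ▸ hk)
      have hsubK : {w | ∃ s, act k s = w} ⊆ K := by
        rintro w ⟨s, rfl⟩; exact hKsub k hk s
      rcases horb k hkθ with h1 | h1
      · exact h1
      · exact absurd (hsubK (by rw [h1]; exact Or.inr rfl)) hKθ
    have hKB : K ⊆ B := by
      have hsubB : {w | ∃ s, act b s = w} ⊆ B := by
        rintro w ⟨s, rfl⟩; exact hBsub b hbB s
      rcases horb b hbθ with h1 | h1
      · intro k hk; exact hsubB (by rw [h1]; exact hk)
      · intro k hk; exact hsubB (by rw [h1]; exact Or.inl hk)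
    obtain ⟨k0, hk0⟩ := hKne
    have hk0θ : k0 ≠ θ := fun h => hKθ (h ▸ hk0)
    obtain ⟨s1, hs1⟩ : ∃ s, act k0 s ≠ k0 := by
      by_contra h
      push_neg at h
      exact hKθ ((huniq k0 h) ▸ hk0)
    have hk1K : act k0 s1 ∈ K := hKsub k0 hk0 s1
    have haux : ∀ v ∈ K, r θ v → False := by
      intro v hv hrv
      have hoK := horbK v hv
      obtain ⟨t0, ht0⟩ : ∃ t, act v t = k0 := by
        have : k0 ∈ {w | ∃ s, act v s = w} := by rw [hoK]; exact hk0
        exact this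
      obtain ⟨t1, ht1⟩ : ∃ t, act v t = act k0 s1 := by
        have : act k0 s1 ∈ {w | ∃ s, act v s = w} := by rw [hoK]; exact hk1K
        exact this
      have h0 : r θ k0 := by
        have := hrc.2 θ v t0 hrv; rwa [hz t0, ht0] at this
      have h1 : r θ (act k0 s1) := by
        have := hrc.2 θ v t1 hrv; rwa [hz t1, ht1] at this
      have hkk : r k0 (act k0 s1) := hrc.1.trans (hrc.1.symm h0) h1
      exact hs1 (hdiag k0 (hKB hk0) (act k0 s1) (hKB hk1K) hkk).symm
    by_cases hK2 : x ∈ K ∧ y ∈ K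
    · exact hxy (hdiag x (hKB hK2.1) y (hKB hK2.2) hrxy)
    · obtain ⟨s, hs⟩ := hsep x y hxy hK2
      have hru : r (act x s) (act y s) := hrc.2 x y s hrxy
      have himg : ∀ z : A, act z s ∈ K ∨ act z s = θ := by
        intro z
        by_cases hzθ : z = θ
        · subst hzθ; exact Or.inr (hz s)
        · have hmem : act z s ∈ {w | ∃ t, act z t = w} := ⟨s, rfl⟩
          rcases horb z hzθ with h1 | h1
          · rw [h1] at hmem; exact Or.inl hmem
          · rw [h1] at hmem
            rcases hmem with h | h
            · exact Or.inl h
            · exact Or.inr h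
      rcases himg x with hx1 | hx1 <;> rcases himg y with hy1 | hy1
      · exact hs (hdiag _ (hKB hx1) _ (hKB hy1) hru)
      · rw [hy1] at hru
        exact haux _ hx1 (hrc.1.symm hru)
      · rw [hx1] at hru
        exact haux _ hy1 hru
      · exact hs (hx1.trans hy1.symm)
end
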